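/- Let n be a positive integer, let {G₁, …, G_J} be a partition of {1, …, n} into nonempty pairwise disjoint index sets, let σ > 0, λ₁ ≥ 0, λ₂ ≥ 0, ω₁, …, ω_J > 0, and set p(x) = λ₁ Σ_{j=1}^J ω_j‖x_{G_j}‖ + λ₂‖x‖₁. For u ∈ ℝⁿ define v ∈ ℝⁿ componentwise by vᵢ = sign(uᵢ)·max(|uᵢ| − σλ₂, 0). Then the unique minimizer x* of w ↦ σp(w) + (1/2)‖w − u‖² is given blockwise, for each j, by x*_{G_j} = (1 − σλ₁ω_j/‖v_{G_j}‖)·v_{G_j} if ‖v_{G_j}‖ > σλ₁ω_j, and x*_{G_j} = 0 if ‖v_{G_j}‖ ≤ σλ₁ω_j. -/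

import Mathlib

/-!
Write the objective as `F = φ + ½‖· - u‖²` with `φ = σ p`. If `u - x*` is a subgradient of `φ`
at `x*`, expanding the square gives `F w ≥ F x* + ½‖w - x*‖²`, so `x*` is the strict minimizer.
Split `u - x* = (u - v) + (v - x*)`. The soft-thresholding residual `u - v` is a subgradient of
`σλ₂‖·‖₁` at `v`, hence at every blockwise nonnegative multiple of `v` such as `x*`. On each block
`v - x*` has norm at most `σλ₁ωⱼ` and pairs with `x*` to `σλ₁ωⱼ‖x*_{Gⱼ}‖`, which by Cauchy–Schwarz
makes it a subgradient of `σλ₁ωⱼ‖·‖`.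
-/

open Finset
open scoped InnerProductSpace

noncomputable def softThreshold (b a : ℝ) : ℝ := Real.sign a * max (|a| - b) 0

noncomputable def groupShrinkFactor (A N : ℝ) : ℝ := if A < N then 1 - A / N else 0

theorem softThreshold_cases {b : ℝ} (hb : 0 ≤ b) (a : ℝ) :
    (|a| ≤ b ∧ softThreshold b a = 0) ∨ (b < a ∧ softThreshold b a = a - b) ∨
      (a < -b ∧ softThreshold b a = a + b) := by
  unfold softThreshold
  rcases le_or_gt |a| b with hab | hab
  · exact Or.inl ⟨hab, by rw [max_eq_right (sub_nonpos.2 hab), mul_zero]⟩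
  · rw [max_eq_left (sub_nonneg.2 hab.le)]
    rcases lt_or_gt_of_ne (abs_pos.1 (hb.trans_lt hab)) with ha | ha
    · rw [Real.sign_of_neg ha, abs_of_neg ha] at *
      exact Or.inr (Or.inr ⟨by linarith, by ring⟩)
    · rw [Real.sign_of_pos ha, abs_of_pos ha] at *
      exact Or.inr (Or.inl ⟨hab, by ring⟩)

theorem abs_sub_softThreshold_le {b : ℝ} (hb : 0 ≤ b) (a : ℝ) : |a - softThreshold b a| ≤ b := by
  rcases softThreshold_cases hb a with ⟨hab, hs⟩ | ⟨-, hs⟩ | ⟨-, hs⟩ <;> rw [hs]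
  · rwa [sub_zero]
  · rw [sub_sub_cancel, abs_of_nonneg hb]
  · rw [sub_add_cancel_left, abs_neg, abs_of_nonneg hb]

theorem sub_softThreshold_mul_self {b : ℝ} (hb : 0 ≤ b) (a : ℝ) :
    (a - softThreshold b a) * softThreshold b a = b * |softThreshold b a| := by
  rcases softThreshold_cases hb a with ⟨-, hs⟩ | ⟨hab, hs⟩ | ⟨hab, hs⟩ <;> rw [hs]
  · simp
  · rw [abs_of_pos (sub_pos.2 hab)]; ring
  · rw [abs_of_neg (by linarith)]; ring

theorem groupShrinkFactor_nonneg {A : ℝ} (hA : 0 ≤ A) (N : ℝ) : 0 ≤ groupShrinkFactor A N := by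
  unfold groupShrinkFactor
  split_ifs with h
  · exact sub_nonneg.2 ((div_le_one (hA.trans_lt h)).2 h.le)
  · exact le_rfl

theorem groupShrinkFactor_le_one {A : ℝ} (hA : 0 ≤ A) (N : ℝ) : groupShrinkFactor A N ≤ 1 := by
  unfold groupShrinkFactor
  split_ifs with h
  · exact sub_le_self _ (div_nonneg hA (hA.trans h.le))
  · exact zero_le_one

theorem one_sub_groupShrinkFactor_mul_le {A N : ℝ} (hA : 0 ≤ A) :
    (1 - groupShrinkFactor A N) * N ≤ A := by
  unfold groupShrinkFactor
  split_ifs with h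
  · rw [sub_sub_cancel, div_mul_cancel₀ _ (hA.trans_lt h).ne']
  · linarith

theorem one_sub_groupShrinkFactor_mul_mul_sq (A N : ℝ) :
    (1 - groupShrinkFactor A N) * groupShrinkFactor A N * N ^ 2 =
      A * (groupShrinkFactor A N * N) := by
  rcases eq_or_ne N 0 with rfl | hN
  · simp
  unfold groupShrinkFactor
  split_ifs
  · field_simp
    ring
  · ring

theorem mul_abs_add_mul_sub_le {L q x : ℝ} (hq : |q| ≤ L) (hqx : q * x = L * |x|) (z : ℝ) :
    L * |x| + q * (z - x) ≤ L * |z| := by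
  have : q * z ≤ L * |z| :=
    (le_abs_self _).trans ((abs_mul q z).trans_le (mul_le_mul_of_nonneg_right hq (abs_nonneg z)))
  linarith

theorem mul_sqrt_sum_sq_add_sum_mul_sub_le {ι : Type*} {s : Finset ι} {A : ℝ} {p x : ι → ℝ}
    (hp : √(∑ i ∈ s, p i ^ 2) ≤ A) (hpx : ∑ i ∈ s, p i * x i = A * √(∑ i ∈ s, x i ^ 2))
    (z : ι → ℝ) :
    A * √(∑ i ∈ s, x i ^ 2) + ∑ i ∈ s, p i * (z i - x i) ≤ A * √(∑ i ∈ s, z i ^ 2) := by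
  have hpz : ∑ i ∈ s, p i * z i ≤ A * √(∑ i ∈ s, z i ^ 2) :=
    (Real.sum_mul_le_sqrt_mul_sqrt s p z).trans
      (mul_le_mul_of_nonneg_right hp (Real.sqrt_nonneg _))
  simp only [mul_sub, sum_sub_distrib]
  linarith

theorem sum_sq_eq_sq_mul_of_eq_mul {ι : Type*} {s : Finset ι} {c : ℝ} {v x : ι → ℝ}
    (hx : ∀ i ∈ s, x i = c * v i) : ∑ i ∈ s, x i ^ 2 = c ^ 2 * ∑ i ∈ s, v i ^ 2 := by
  rw [mul_sum]
  exact sum_congr rfl fun i hi => by rw [hx i hi, mul_pow]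

theorem groupShrink_subgradient {ι : Type*} {s : Finset ι} {A : ℝ} (hA : 0 ≤ A) {v x : ι → ℝ}
    (hx : ∀ i ∈ s, x i = groupShrinkFactor A √(∑ i ∈ s, v i ^ 2) * v i) (z : ι → ℝ) :
    A * √(∑ i ∈ s, x i ^ 2) + ∑ i ∈ s, (v i - x i) * (z i - x i) ≤ A * √(∑ i ∈ s, z i ^ 2) := by
  set N := √(∑ i ∈ s, v i ^ 2)
  set c := groupShrinkFactor A N
  have hN : 0 ≤ N := Real.sqrt_nonneg _
  have hvN : ∑ i ∈ s, v i ^ 2 = N ^ 2 := (Real.sq_sqrt (sum_nonneg fun i _ => sq_nonneg _)).symm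
  have hc : 0 ≤ c := groupShrinkFactor_nonneg hA N
  have hc1 : 0 ≤ 1 - c := sub_nonneg.2 (groupShrinkFactor_le_one hA N)
  apply mul_sqrt_sum_sq_add_sum_mul_sub_le
  · have hres : ∀ i ∈ s, v i - x i = (1 - c) * v i := fun i hi => by rw [hx i hi]; ring
    rw [sum_sq_eq_sq_mul_of_eq_mul hres, hvN, ← mul_pow, Real.sqrt_sq (mul_nonneg hc1 hN)]
    exact one_sub_groupShrinkFactor_mul_le hA
  · have hprod : ∀ i ∈ s, (v i - x i) * x i = (1 - c) * c * v i ^ 2 :=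
      fun i hi => by rw [hx i hi]; ring
    rw [sum_congr rfl hprod, ← mul_sum, sum_sq_eq_sq_mul_of_eq_mul hx, hvN, ← mul_pow,
      Real.sqrt_sq (mul_nonneg hc hN)]
    exact one_sub_groupShrinkFactor_mul_mul_sq A N

theorem softThreshold_subgradient {b : ℝ} (hb : 0 ≤ b) (a : ℝ) {c : ℝ} (hc : 0 ≤ c) (z : ℝ) :
    b * |c * softThreshold b a| + (a - softThreshold b a) * (z - c * softThreshold b a) ≤
      b * |z| := by
  refine mul_abs_add_mul_sub_le (abs_sub_softThreshold_le hb a) ?_ z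
  rw [abs_mul, abs_of_nonneg hc, mul_left_comm, sub_softThreshold_mul_self hb a, mul_left_comm]

theorem sum_eq_sum_sum_of_partition {ι κ M : Type*} [Fintype ι] [Fintype κ] [AddCommMonoid M]
    {G : κ → Finset ι} (hdisj : ∀ j k, j ≠ k → Disjoint (G j) (G k)) (hcover : ∀ i, ∃ j, i ∈ G j)
    (f : ι → M) : ∑ i, f i = ∑ j, ∑ i ∈ G j, f i := by
  classical
  have huniv : (univ : Finset ι) = univ.biUnion G := by
    ext i
    simpa using hcover i
  rw [huniv, sum_biUnion fun j _ k _ hjk => hdisj j k hjk]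

theorem add_half_norm_sub_sq_le_of_subgradient {E : Type*} [NormedAddCommGroup E]
    [InnerProductSpace ℝ E] {φ : E → ℝ} {x u : E} (h : ∀ z, φ x + ⟪u - x, z - x⟫_ℝ ≤ φ z)
    (z : E) : φ x + 1 / 2 * ‖x - u‖ ^ 2 + 1 / 2 * ‖z - x‖ ^ 2 ≤ φ z + 1 / 2 * ‖z - u‖ ^ 2 := by
  have hexpand : ‖z - u‖ ^ 2 = ‖z - x‖ ^ 2 - 2 * ⟪u - x, z - x⟫_ℝ + ‖x - u‖ ^ 2 := by
    rw [show z - u = (z - x) - (u - x) by abel, norm_sub_sq_real, real_inner_comm,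
      norm_sub_rev u x]
  linarith [h z]

theorem sparseGroup_subgradient {ι κ : Type*} [Fintype ι] [Fintype κ] {G : κ → Finset ι}
    (hdisj : ∀ j k, j ≠ k → Disjoint (G j) (G k)) (hcover : ∀ i, ∃ j, i ∈ G j)
    {A : κ → ℝ} (hA : ∀ j, 0 ≤ A j) {b : ℝ} (hb : 0 ≤ b) {u v x : ι → ℝ}
    (hv : ∀ i, v i = softThreshold b (u i))
    (hx : ∀ j, ∀ i ∈ G j, x i = groupShrinkFactor (A j) √(∑ k ∈ G j, v k ^ 2) * v i)
    (z : ι → ℝ) :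
    ∑ j, A j * √(∑ i ∈ G j, x i ^ 2) + b * ∑ i, |x i| + ∑ i, (u i - x i) * (z i - x i) ≤
      ∑ j, A j * √(∑ i ∈ G j, z i ^ 2) + b * ∑ i, |z i| := by
  have hgroup : ∑ j, A j * √(∑ i ∈ G j, x i ^ 2) + ∑ i, (v i - x i) * (z i - x i) ≤
      ∑ j, A j * √(∑ i ∈ G j, z i ^ 2) := by
    rw [sum_eq_sum_sum_of_partition hdisj hcover, ← sum_add_distrib]
    exact sum_le_sum fun j _ => groupShrink_subgradient (hA j) (hx j) z
  have hl1 : b * ∑ i, |x i| + ∑ i, (u i - v i) * (z i - x i) ≤ b * ∑ i, |z i| := by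
    rw [mul_sum, mul_sum, ← sum_add_distrib]
    refine sum_le_sum fun i _ => ?_
    obtain ⟨j, hj⟩ := hcover i
    rw [hx j i hj, hv i]
    exact softThreshold_subgradient hb (u i) (groupShrinkFactor_nonneg (hA j) _) (z i)
  have hsplit : ∑ i, (u i - x i) * (z i - x i) =
      ∑ i, (u i - v i) * (z i - x i) + ∑ i, (v i - x i) * (z i - x i) := by
    rw [← sum_add_distrib]
    exact sum_congr rfl fun i _ => by ring
  linarith

theorem sparse_group_prox_formula_general (n J : ℕ)
    (G : Fin J → Finset (Fin n))
    (hGdisj : ∀ j k, j ≠ k → Disjoint (G j) (G k))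
    (hGcover : ∀ i, ∃ j, i ∈ G j)
    (σ : ℝ) (hσ : 0 < σ)
    (lam₁ lam₂ : ℝ) (hlam₁ : 0 ≤ lam₁) (hlam₂ : 0 ≤ lam₂)
    (ω : Fin J → ℝ) (hω : ∀ j, 0 < ω j)
    (u : EuclideanSpace ℝ (Fin n))
    (v : EuclideanSpace ℝ (Fin n))
    (hvdef : ∀ i, v i = Real.sign (u i) * max (|u i| - σ * lam₂) 0)
    (xstar : EuclideanSpace ℝ (Fin n))
    (hxstar : ∀ j, ∀ i ∈ G j,
      xstar i = if σ * lam₁ * ω j < Real.sqrt (∑ k ∈ G j, (v k) ^ 2)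
        then (1 - σ * lam₁ * ω j / Real.sqrt (∑ k ∈ G j, (v k) ^ 2)) * v i else 0) :
    ∀ w : EuclideanSpace ℝ (Fin n), w ≠ xstar →
      σ * (lam₁ * (∑ j, ω j * Real.sqrt (∑ k ∈ G j, (xstar k) ^ 2)) + lam₂ * ∑ i, |xstar i|)
          + 1 / 2 * ‖xstar - u‖ ^ 2 <
      σ * (lam₁ * (∑ j, ω j * Real.sqrt (∑ k ∈ G j, (w k) ^ 2)) + lam₂ * ∑ i, |w i|)
          + 1 / 2 * ‖w - u‖ ^ 2 := by
  intro w hw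
  set φ : EuclideanSpace ℝ (Fin n) → ℝ := fun y =>
    σ * (lam₁ * (∑ j, ω j * √(∑ k ∈ G j, (y k) ^ 2)) + lam₂ * ∑ i, |y i|)
  have hφ : ∀ y, φ y = ∑ j, σ * lam₁ * ω j * √(∑ k ∈ G j, y k ^ 2) + σ * lam₂ * ∑ i, |y i| := by
    intro y
    simp only [φ, mul_sum, mul_add, mul_assoc]
  have hx : ∀ j, ∀ i ∈ G j,
      xstar i = groupShrinkFactor (σ * lam₁ * ω j) √(∑ k ∈ G j, v k ^ 2) * v i := by
    intro j i hi
    rw [hxstar j i hi, groupShrinkFactor, ite_mul, zero_mul]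
  have hsub : ∀ z, φ xstar + ⟪u - xstar, z - xstar⟫_ℝ ≤ φ z := by
    intro z
    have hpenalty := sparseGroup_subgradient hGdisj hGcover
      (fun j => mul_nonneg (mul_nonneg hσ.le hlam₁) (hω j).le) (mul_nonneg hσ.le hlam₂)
      hvdef hx z
    simpa only [hφ, PiLp.inner_apply, PiLp.sub_apply, Real.inner_apply] using hpenalty
  have hprox := add_half_norm_sub_sq_le_of_subgradient hsub w
  have hpos : 0 < ‖w - xstar‖ := norm_pos_iff.2 (sub_ne_zero.2 hw)
  linarith [pow_pos hpos 2]

/-- With `p(x) = λ₁ Σⱼ ωⱼ‖x_{Gⱼ}‖ + λ₂‖x‖₁` and `v` the soft-thresholding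
of `u` at level `σλ₂`, the unique minimizer `x*` of `w ↦ σp(w) + (1/2)‖w − u‖²` is given
blockwise by `x*_{Gⱼ} = (1 − σλ₁ωⱼ/‖v_{Gⱼ}‖)·v_{Gⱼ}` if `‖v_{Gⱼ}‖ > σλ₁ωⱼ`, and
`x*_{Gⱼ} = 0` otherwise. -/
theorem sparse_group_prox_formula (n J : ℕ) (hn : 0 < n) (hJ : 0 < J)
    (G : Fin J → Finset (Fin n))
    (hGne : ∀ j, (G j).Nonempty)
    (hGdisj : ∀ j k, j ≠ k → Disjoint (G j) (G k))
    (hGcover : ∀ i, ∃ j, i ∈ G j)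
    (σ : ℝ) (hσ : 0 < σ)
    (lam₁ lam₂ : ℝ) (hlam₁ : 0 ≤ lam₁) (hlam₂ : 0 ≤ lam₂)
    (ω : Fin J → ℝ) (hω : ∀ j, 0 < ω j)
    (u : EuclideanSpace ℝ (Fin n))
    (v : EuclideanSpace ℝ (Fin n))
    (hvdef : ∀ i, v i = Real.sign (u i) * max (|u i| - σ * lam₂) 0)
    (xstar : EuclideanSpace ℝ (Fin n))
    (hxstar : ∀ j, ∀ i ∈ G j,
      xstar i = if σ * lam₁ * ω j < Real.sqrt (∑ k ∈ G j, (v k) ^ 2)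
        then (1 - σ * lam₁ * ω j / Real.sqrt (∑ k ∈ G j, (v k) ^ 2)) * v i else 0) :
    ∀ w : EuclideanSpace ℝ (Fin n), w ≠ xstar →
      σ * (lam₁ * (∑ j, ω j * Real.sqrt (∑ k ∈ G j, (xstar k) ^ 2)) + lam₂ * ∑ i, |xstar i|)
          + 1 / 2 * ‖xstar - u‖ ^ 2 <
      σ * (lam₁ * (∑ j, ω j * Real.sqrt (∑ k ∈ G j, (w k) ^ 2)) + lam₂ * ∑ i, |w i|)
          + 1 / 2 * ‖w - u‖ ^ 2 :=
  sparse_group_prox_formula_general n J G hGdisj hGcover σ hσ lam₁ lam₂ hlam₁ hlam₂ ω hω u v hvdef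
    xstar hxstar
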